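/- For all integers p, q ≥ 2 with p even and q odd, the direct (tensor) product of complete graphs satisfies χ_so(K_p × K_q) = q. -/

import Mathlib

/-- A strong odd coloring of a simple graph: a proper vertex coloring such that for every
vertex `v` and every color `c`, the number of neighbors of `v` colored `c` is zero or odd. -/
def SimpleGraph.IsStrongOddColoring {V α : Type*} (G : SimpleGraph V) (φ : V → α) : Prop :=
  (∀ ⦃u v⦄, G.Adj u v → φ u ≠ φ v) ∧
    ∀ v c, Nat.card {u // G.Adj v u ∧ φ u = c} = 0 ∨
      Odd (Nat.card {u // G.Adj v u ∧ φ u = c})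

/-- The strong odd chromatic number: the least `k` such that there is a strong odd
coloring using `k` colors. -/
noncomputable def SimpleGraph.strongOddChromaticNumber {V : Type*} (G : SimpleGraph V) : ℕ :=
  sInf {k | ∃ φ : V → Fin k, G.IsStrongOddColoring φ}

/-- The direct (tensor) product of two simple graphs. -/
def SimpleGraph.directProd {α β : Type*} (G : SimpleGraph α) (H : SimpleGraph β) :
    SimpleGraph (α × β) where
  Adj x y := G.Adj x.1 y.1 ∧ H.Adj x.2 y.2
  symm := by constructor; rintro x y ⟨h1, h2⟩; exact ⟨h1.symm, h2.symm⟩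
  loopless := by constructor; rintro x ⟨h1, -⟩; exact G.ne_of_adj h1 rfl

lemma directProd_top_adj {p q : ℕ} (u v : Fin p × Fin q) :
    ((⊤ : SimpleGraph (Fin p)).directProd (⊤ : SimpleGraph (Fin q))).Adj u v ↔
      u.1 ≠ v.1 ∧ u.2 ≠ v.2 := by
  simp [SimpleGraph.directProd]

/-- `χ_so(K_p × K_q) = q` for `p, q ≥ 2` with `p` even and `q` odd. -/
theorem strongOddChromaticNumber_directProd_complete_even_odd (p q : ℕ)
    (hp : 2 ≤ p) (hq : 2 ≤ q) (hpe : Even p) (hqo : Odd q) :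
    ((⊤ : SimpleGraph (Fin p)).directProd (⊤ : SimpleGraph (Fin q))).strongOddChromaticNumber =
      q := by
  classical
  set G := ((⊤ : SimpleGraph (Fin p)).directProd (⊤ : SimpleGraph (Fin q))) with hG
  -- upper bound: the coloring (i, j) ↦ j
  have hmem : q ∈ {k | ∃ φ : Fin p × Fin q → Fin k, G.IsStrongOddColoring φ} := by
    refine ⟨fun v => v.2, ?_, ?_⟩
    · intro u v huv h
      exact ((directProd_top_adj u v).1 huv).2 h
    · intro v c
      by_cases hc : c = v.2
      · left
        rw [Nat.card_eq_fintype_card, Fintype.card_eq_zero_iff]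
        constructor
        rintro ⟨u, hadj, hu⟩
        exact ((directProd_top_adj v u).1 hadj).2 (hu.trans hc).symm
      · right
        have e : {u : Fin p × Fin q // G.Adj v u ∧ u.2 = c} ≃ {a : Fin p // a ≠ v.1} :=
          { toFun := fun u => ⟨u.1.1, fun h => ((directProd_top_adj v u.1).1 u.2.1).1 h.symm⟩
            invFun := fun a => ⟨(a.1, c),
              (directProd_top_adj v (a.1, c)).2 ⟨fun h => a.2 h.symm, fun h => hc h.symm⟩, rfl⟩
            left_inv := fun u => Subtype.ext (Prod.ext rfl u.2.2.symm)
            right_inv := fun a => rfl }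
        rw [Nat.card_congr e, Nat.card_eq_fintype_card, Fintype.card_subtype]
        have hfe : Finset.univ.filter (fun a => a ≠ v.1) = Finset.univ.erase v.1 := by
          ext a; simp
        rw [hfe, Finset.card_erase_of_mem (Finset.mem_univ _), Finset.card_univ,
          Fintype.card_fin]
        exact Nat.Even.sub_odd (by omega) hpe odd_one
  refine le_antisymm (Nat.sInf_le hmem) (le_csInf ⟨q, hmem⟩ ?_)
  -- lower bound
  rintro k ⟨φ, hproper, hodd⟩
  by_contra hlt
  push_neg at hlt
  set z : Fin p := ⟨0, by omega⟩ with hz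
  set o : Fin p := ⟨1, by omega⟩ with ho
  have hzo : o ≠ z := by simp [hz, ho, Fin.ext_iff]
  -- pigeonhole on row z
  obtain ⟨j1, j2, hj, hcc⟩ := Fintype.exists_ne_map_eq_of_card_lt
    (fun j : Fin q => φ (z, j)) (by simpa using hlt)
  set c : Fin k := φ (z, j1) with hc
  -- the color class of c lies in row z
  have hrow : ∀ u : Fin p × Fin q, φ u = c → u.1 = z := by
    intro u hu
    by_contra ha
    have h1 : u.2 = j1 := by
      by_contra hb
      exact hproper ((directProd_top_adj u (z, j1)).2 ⟨ha, hb⟩) (hu.trans hc)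
    have h2 : u.2 = j2 := by
      by_contra hb
      exact hproper ((directProd_top_adj u (z, j2)).2 ⟨ha, hb⟩) (hu.trans (hc.trans hcc))
    exact hj (h1 ▸ h2)
  set Tset : Finset (Fin q) := Finset.univ.filter (fun j => φ (z, j) = c) with hT
  -- counting lemma
  have hcount : ∀ j0 : Fin q,
      Nat.card {u : Fin p × Fin q // G.Adj (o, j0) u ∧ φ u = c} = (Tset.erase j0).card := by
    intro j0
    have e : {u : Fin p × Fin q // G.Adj (o, j0) u ∧ φ u = c} ≃
        {j : Fin q // j ≠ j0 ∧ φ (z, j) = c} :=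
      { toFun := fun u => ⟨u.1.2, fun h => ((directProd_top_adj (o, j0) u.1).1 u.2.1).2 h.symm,
          by
            have hu1 : ((z, u.1.2) : Fin p × Fin q) = u.1 :=
              Prod.ext (hrow _ u.2.2).symm rfl
            rw [hu1]; exact u.2.2⟩
        invFun := fun j => ⟨(z, j.1),
          (directProd_top_adj (o, j0) (z, j.1)).2 ⟨hzo, fun h => j.2.1 h.symm⟩, j.2.2⟩
        left_inv := fun u => Subtype.ext (Prod.ext (hrow _ u.2.2).symm rfl)
        right_inv := fun j => rfl }
    rw [Nat.card_congr e, Nat.card_eq_fintype_card, Fintype.card_subtype]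
    congr 1
    ext j
    simp [hT, Finset.mem_erase, and_comm]
  have hmem1 : j1 ∈ Tset := by simp [hT, hc]
  have hmem2 : j2 ∈ Tset := by simp [hT, hc, hcc.symm]
  have hT2 : 2 ≤ Tset.card := Finset.one_lt_card.mpr ⟨j1, hmem1, j2, hmem2, hj⟩
  -- parity: Tset.card is even
  have heven : Even Tset.card := by
    have h := hodd (o, j1) c
    rw [hcount j1, Finset.card_erase_of_mem hmem1] at h
    rcases h with h | h
    · omega
    · have : Tset.card = (Tset.card - 1) + 1 := by omega
      rw [this]
      exact Odd.add_one h
  -- Tset ≠ univ, so pick a column not in Tset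
  have hne : Tset ≠ Finset.univ := by
    intro h
    rw [h, Finset.card_univ, Fintype.card_fin] at heven
    exact (Nat.not_even_iff_odd.2 hqo) heven
  obtain ⟨j0, hj0⟩ : ∃ j0, j0 ∉ Tset := by
    by_contra h
    push_neg at h
    exact hne (Finset.eq_univ_iff_forall.2 h)
  have h := hodd (o, j0) c
  rw [hcount j0, Finset.erase_eq_of_notMem hj0] at h
  rcases h with h | h
  · omega
  · exact (Nat.not_even_iff_odd.2 h) heven
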